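/- For the decentralized update with constant learning rate η > 0, with R_sp ≥ ||ΔW(0)||²_F, E_sp ≥ sup_k E_ξ||ΔG(k)||²_F, e_q (for q ≥ 2, summing to 1) upper bounds on the normalized fractions of expected energy of ΔG(k) in the range of P_q, and α := sqrt(Σ_{q=2}^Q e_q |λ_q/λ2|²) (α := 1 if λ2 = 0), the following holds for every k ≥ 0: E_ξ[ ||ΔW(k)||_F ] ≤ √M·√R_sp·|λ2|^k + η·√E_sp·( (1−α)·1_{k ≥ 1} + α·(1−|λ2|^k)/(1−|λ2|) ). -/

import Mathlib

open MeasureTheory Matrix Finset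

noncomputable section

/-- Squared Frobenius norm of a real matrix. -/
def frobSq {n M : ℕ} (B : Matrix (Fin n) (Fin M) ℝ) : ℝ := ∑ i, ∑ j, B i j ^ 2

/-- Frobenius norm of a real matrix. -/
def frobNorm {n M : ℕ} (B : Matrix (Fin n) (Fin M) ℝ) : ℝ := Real.sqrt (frobSq B)

/-- Squared Frobenius norm of a complex matrix. -/
def frobSqC {n M : ℕ} (B : Matrix (Fin n) (Fin M) ℂ) : ℝ := ∑ i, ∑ j, ‖B i j‖ ^ 2

/-- The `j`-th column of a matrix, viewed as a vector of `EuclideanSpace ℝ (Fin n)`. -/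
def col {n M : ℕ} (B : Matrix (Fin n) (Fin M) ℝ) (j : Fin M) : EuclideanSpace ℝ (Fin n) :=
  WithLp.toLp 2 fun i => B i j

/-- `ΔB := B (I - 𝟙𝟙ᵀ/M)`: subtract from every column the average of all columns. -/
def ctr {n M : ℕ} (B : Matrix (Fin n) (Fin M) ℝ) : Matrix (Fin n) (Fin M) ℝ :=
  Matrix.of fun i j => B i j - (∑ j', B i j') / M

/-- The average of the columns of `B` (the average model `w̄`). -/
def colAvg {n M : ℕ} (B : Matrix (Fin n) (Fin M) ℝ) : EuclideanSpace ℝ (Fin n) :=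
  WithLp.toLp 2 fun i => (∑ j, B i j) / M

/-- Time average of a sequence of vectors over iterations `0, …, K-1`. -/
def timeAvg {n : ℕ} (K : ℕ) (v : ℕ → EuclideanSpace ℝ (Fin n)) : EuclideanSpace ℝ (Fin n) :=
  WithLp.toLp 2 fun i => (∑ k ∈ Finset.range K, v k i) / K

/-- `g` is a subgradient of `f` at `x`. -/
def IsSubgradAt {n : ℕ} (f : EuclideanSpace ℝ (Fin n) → ℝ)
    (g x : EuclideanSpace ℝ (Fin n)) : Prop :=
  ∀ y, f x + (inner ℝ g (y - x) : ℝ) ≤ f y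

/-
Unrolling the update, and using that centering commutes with the doubly stochastic `A`, gives
`ΔW(k) = ΔW(0) Aᵏ - η ∑_{s<k} ΔG(s) A^(k-1-s)`. Because the `P_q` are orthogonal projectors and
`ΔB P₁ = 0`, `‖ΔB Aᵐ‖²_F = ∑_{q≥2} |λ_q|^(2m) ‖ΔB P_q‖²_F`. Hence the initial term contracts like
`|λ₂|ᵏ`, and by Jensen `E‖ΔG(s) Aᵐ‖_F ≤ (E‖ΔG(s) Aᵐ‖²_F)^(1/2)`, which is at most `√E_sp` for
`m = 0` and at most `α |λ₂|ᵐ √E_sp` for `m ≥ 1`. The triangle inequality and a geometric sum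
finish the proof.
-/

lemma frobSq_nonneg {n M : ℕ} (B : Matrix (Fin n) (Fin M) ℝ) : 0 ≤ frobSq B := by
  unfold frobSq; positivity

lemma frobSqC_nonneg {n M : ℕ} (B : Matrix (Fin n) (Fin M) ℂ) : 0 ≤ frobSqC B := by
  unfold frobSqC; positivity

lemma frobSqC_map_ofReal {n M : ℕ} (B : Matrix (Fin n) (Fin M) ℝ) :
    frobSqC (B.map (fun x => (x : ℂ))) = frobSq B := by
  simp [frobSqC, frobSq]

lemma re_trace_mul_conjTranspose {n M : ℕ} (X : Matrix (Fin n) (Fin M) ℂ) :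
    (X * Xᴴ).trace.re = frobSqC X := by
  simp only [trace, diag_apply, Matrix.mul_apply, conjTranspose_apply, RCLike.star_def,
    Complex.mul_conj, Complex.normSq_eq_norm_sq, Complex.ofReal_pow, Complex.re_sum, frobSqC]
  norm_cast

section FrobeniusNorm

attribute [local instance] Matrix.frobeniusNormedAddCommGroup Matrix.frobeniusNormedSpace

lemma frobNorm_eq_norm {n M : ℕ} (B : Matrix (Fin n) (Fin M) ℝ) : frobNorm B = ‖B‖ := by
  simp [frobNorm, frobSq, Matrix.frobenius_norm_def, Real.sqrt_eq_rpow]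

lemma frobNorm_sub_smul_sum_le {n M : ℕ} {ι : Type*} (X : Matrix (Fin n) (Fin M) ℝ) {η : ℝ}
    (hη : 0 ≤ η) (s : Finset ι) (Y : ι → Matrix (Fin n) (Fin M) ℝ) :
    frobNorm (X - η • ∑ i ∈ s, Y i) ≤ frobNorm X + η * ∑ i ∈ s, frobNorm (Y i) := by
  simp only [frobNorm_eq_norm]
  calc ‖X - η • ∑ i ∈ s, Y i‖ ≤ ‖X‖ + η * ‖∑ i ∈ s, Y i‖ :=
        (norm_sub_le _ _).trans_eq (by rw [norm_smul, Real.norm_of_nonneg hη])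
    _ ≤ ‖X‖ + η * ∑ i ∈ s, ‖Y i‖ := by gcongr; exact norm_sum_le _ _

end FrobeniusNorm

lemma CompleteOrthogonalIdempotents.sum_smul_pow {𝕜 R ι : Type*} [CommSemiring 𝕜] [Semiring R]
    [Algebra 𝕜 R] [Fintype ι] {P : ι → R} (hP : CompleteOrthogonalIdempotents P)
    (c : ι → 𝕜) (m : ℕ) : (∑ i, c i • P i) ^ m = ∑ i, c i ^ m • P i := by
  induction m with
  | zero => simp [hP.complete]
  | succ m ih =>
    rw [pow_succ, ih, sum_mul_sum]
    refine sum_congr rfl fun i _ => ?_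
    rw [sum_eq_single i (fun j _ hji => by
        rw [smul_mul_smul_comm, hP.ortho hji.symm, smul_zero]) (by simp),
      smul_mul_smul_comm, (hP.idem i).eq, pow_succ]

lemma frobSqC_mul_sum_smul {n M : ℕ} {ι : Type*} [Fintype ι] {P : ι → Matrix (Fin M) (Fin M) ℂ}
    (hherm : ∀ i, (P i)ᴴ = P i) (hortho : Pairwise fun i j => P i * P j = 0)
    (C : Matrix (Fin n) (Fin M) ℂ) (c : ι → ℂ) :
    frobSqC (C * ∑ i, c i • P i) = ∑ i, ‖c i‖ ^ 2 * frobSqC (C * P i) := by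
  have hcross : ∀ i j, i ≠ j → (C * P i * (C * P j)ᴴ) = 0 := fun i j hij => by
    rw [conjTranspose_mul, hherm, Matrix.mul_assoc, ← Matrix.mul_assoc (P i), hortho hij,
      Matrix.zero_mul, Matrix.mul_zero]
  have hdistrib : C * ∑ i, c i • P i = ∑ i, c i • (C * P i) := by
    simp only [Matrix.mul_sum, Matrix.mul_smul]
  rw [← re_trace_mul_conjTranspose, hdistrib]
  simp only [conjTranspose_sum, conjTranspose_smul, Matrix.sum_mul, Matrix.mul_sum,
    Matrix.smul_mul, Matrix.mul_smul, trace_sum, trace_smul, Complex.re_sum]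
  refine sum_congr rfl fun i _ => ?_
  rw [sum_eq_single i (fun j _ hji => by rw [hcross j i hji]; simp) (by simp),
    ← re_trace_mul_conjTranspose, smul_smul, smul_eq_mul, Complex.star_def, Complex.conj_mul',
    ← Complex.ofReal_pow, Complex.re_ofReal_mul]

section Centering

variable {n M : ℕ}

lemma sum_ctr_apply (B : Matrix (Fin n) (Fin M) ℝ) (i : Fin n) : ∑ j, ctr B i j = 0 := by
  rcases M.eq_zero_or_pos with rfl | hM
  · simp
  · have hM' : (M : ℝ) ≠ 0 := by positivity
    simp only [ctr, of_apply, sum_sub_distrib, sum_const, card_univ, Fintype.card_fin, nsmul_eq_mul]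
    field_simp
    ring

lemma ctr_sub (X Y : Matrix (Fin n) (Fin M) ℝ) : ctr (X - Y) = ctr X - ctr Y := by
  ext i j
  simp only [ctr, of_apply, Matrix.sub_apply, sum_sub_distrib]
  ring

lemma ctr_smul (c : ℝ) (X : Matrix (Fin n) (Fin M) ℝ) : ctr (c • X) = c • ctr X := by
  ext i j
  simp only [ctr, of_apply, Matrix.smul_apply, ← mul_sum, smul_eq_mul]
  ring

lemma ctr_mul_of_doublyStochastic {A : Matrix (Fin M) (Fin M) ℝ}
    (hrows : ∀ i, ∑ j, A i j = 1) (hcols : ∀ j, ∑ i, A i j = 1)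
    (B : Matrix (Fin n) (Fin M) ℝ) : ctr (B * A) = ctr B * A := by
  ext i j
  have hrow : ∑ j', ∑ k, B i k * A k j' = ∑ k, B i k := by
    rw [sum_comm]
    simp [← mul_sum, hrows]
  simp [ctr, mul_apply, hrow, sub_mul, sum_sub_distrib, ← mul_sum, hcols]

lemma map_ofReal_ctr_mul_const (B : Matrix (Fin n) (Fin M) ℝ) (c : ℂ) :
    (ctr B).map (fun x => (x : ℂ)) * (of fun _ _ => c : Matrix (Fin M) (Fin M) ℂ) = 0 := by
  ext i j
  simp [mul_apply, ← sum_mul, ← Complex.ofReal_sum, sum_ctr_apply]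

end Centering

lemma eq_mul_pow_sub_sum_of_succ {m n R : Type*} [Fintype n] [DecidableEq n] [CommRing R]
    {W G : ℕ → Matrix m n R} {A : Matrix n n R} {η : R}
    (hW : ∀ k, W (k + 1) = W k * A - η • G k) (k : ℕ) :
    W k = W 0 * A ^ k - η • ∑ s ∈ range k, G s * A ^ (k - 1 - s) := by
  induction k with
  | zero => simp
  | succ k ih =>
    have hpow : ∀ s ∈ range k, G s * A ^ (k - 1 - s) * A = G s * A ^ (k - s) := fun s hs => by
      rw [Matrix.mul_assoc, ← pow_succ]
      congr 2
      have := mem_range.mp hs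
      omega
    rw [hW, ih, Matrix.sub_mul, Matrix.smul_mul, Matrix.sum_mul, sum_congr rfl hpow,
      sum_range_succ, Nat.add_sub_cancel, Nat.sub_self, pow_zero, Matrix.mul_one,
      Matrix.mul_assoc, ← pow_succ, smul_add, sub_sub]

lemma ctr_eq_mul_pow_sub_sum_of_succ {n M : ℕ} {A : Matrix (Fin M) (Fin M) ℝ}
    (hrows : ∀ i, ∑ j, A i j = 1) (hcols : ∀ j, ∑ i, A i j = 1)
    {W G : ℕ → Matrix (Fin n) (Fin M) ℝ} {η : ℝ} (hW : ∀ k, W (k + 1) = W k * A - η • G k)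
    (k : ℕ) :
    ctr (W k) = ctr (W 0) * A ^ k - η • ∑ s ∈ range k, ctr (G s) * A ^ (k - 1 - s) :=
  eq_mul_pow_sub_sum_of_succ (W := fun k => ctr (W k)) (fun k => by
    simp only [hW, ctr_sub, ctr_smul, ctr_mul_of_doublyStochastic hrows hcols]) k

section Expectation

variable {Ω : Type*} [MeasurableSpace Ω] {μ : Measure Ω}

lemma MeasureTheory.Integrable.sqrt [IsFiniteMeasure μ] {f : Ω → ℝ} (hf : Integrable f μ)
    (hf0 : ∀ ω, 0 ≤ f ω) : Integrable (fun ω => √(f ω)) μ := by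
  have hmeas : AEStronglyMeasurable (fun ω => √(f ω)) μ :=
    Real.continuous_sqrt.comp_aestronglyMeasurable hf.aestronglyMeasurable
  refine ((memLp_two_iff_integrable_sq hmeas).mpr ?_).integrable one_le_two
  simpa [Real.sq_sqrt (hf0 _)] using hf

lemma integral_sqrt_le_sqrt_integral [IsProbabilityMeasure μ] {f : Ω → ℝ} (hf : Integrable f μ)
    (hf0 : ∀ ω, 0 ≤ f ω) : ∫ ω, √(f ω) ∂μ ≤ √(∫ ω, f ω ∂μ) :=
  Real.strictConcaveOn_sqrt.concaveOn.le_map_integral Real.continuous_sqrt.continuousOn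
    isClosed_Ici (ae_of_all _ hf0) hf (hf.sqrt hf0)

lemma integral_le_add_mul_sum_integral [IsProbabilityMeasure μ] {ι : Type*} {s : Finset ι}
    {f : Ω → ℝ} {g : ι → Ω → ℝ} {a η : ℝ} (hf0 : ∀ ω, 0 ≤ f ω) (hg : ∀ i ∈ s, Integrable (g i) μ)
    (hfg : ∀ ω, f ω ≤ a + η * ∑ i ∈ s, g i ω) :
    ∫ ω, f ω ∂μ ≤ a + η * ∑ i ∈ s, ∫ ω, g i ω ∂μ := by
  have hint : Integrable (fun ω => a + η * ∑ i ∈ s, g i ω) μ :=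
    (integrable_const a).add ((integrable_finsetSum s hg).const_mul η)
  refine (integral_mono_of_nonneg (ae_of_all _ hf0) hint (ae_of_all _ hfg)).trans_eq ?_
  rw [integral_add (integrable_const a) ((integrable_finsetSum s hg).const_mul η),
    integral_const, probReal_univ, one_smul, integral_const_mul, integral_finsetSum s hg]

end Expectation

lemma sum_pow_mul_le_sq_mul {ι : Type*} {s : Finset ι} {x e : ι → ℝ} {E r α : ℝ}
    (hx : ∀ i ∈ s, 0 ≤ x i ∧ x i ≤ r) (he : ∀ i ∈ s, 0 ≤ e i * E) (hesum : ∑ i ∈ s, e i = 1)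
    (hα : α = if r ≠ 0 then √(∑ i ∈ s, e i * (x i / r) ^ 2) else 1) (m : ℕ) :
    ∑ i ∈ s, x i ^ (2 * m) * (e i * E) ≤ (if m = 0 then 1 else α * r ^ m) ^ 2 * E := by
  have hE : 0 ≤ E := by simpa [← sum_mul, hesum] using sum_nonneg he
  rcases m.eq_zero_or_pos with rfl | hm
  · simp [← sum_mul, hesum]
  by_cases hr : r = 0
  · have hx0 : ∀ i ∈ s, x i = 0 := fun i hi => by linarith [hx i hi]
    rw [sum_eq_zero fun i hi => by simp [hx0 i hi, hm.ne']]
    simp [hr, hm.ne']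
  calc ∑ i ∈ s, x i ^ (2 * m) * (e i * E)
      ≤ ∑ i ∈ s, r ^ (2 * m) * E * (e i * (x i / r) ^ 2) := by
        refine sum_le_sum fun i hi => ?_
        have hpow : x i ^ (2 * m) ≤ r ^ (2 * m - 2) * x i ^ 2 := by
          rw [← pow_sub_mul_pow _ (by omega : 2 ≤ 2 * m)]
          exact mul_le_mul_of_nonneg_right (pow_le_pow_left₀ (hx i hi).1 (hx i hi).2 _)
            (sq_nonneg _)
        calc x i ^ (2 * m) * (e i * E) ≤ r ^ (2 * m - 2) * x i ^ 2 * (e i * E) :=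
              mul_le_mul_of_nonneg_right hpow (he i hi)
          _ = r ^ (2 * m) * E * (e i * (x i / r) ^ 2) := by
              rw [← pow_sub_mul_pow r (by omega : 2 ≤ 2 * m)]
              field_simp
    _ ≤ (α * r ^ m) ^ 2 * E := by
        have hr2m : 0 ≤ r ^ (2 * m) := pow_mul r 2 m ▸ pow_nonneg (sq_nonneg r) m
        rw [← mul_sum, hα, if_pos hr, mul_pow, Real.sq_sqrt', ← pow_mul, mul_comm m 2]
        nlinarith [le_max_left (∑ i ∈ s, e i * (x i / r) ^ 2) 0, mul_nonneg hr2m hE]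
    _ = (if m = 0 then 1 else α * r ^ m) ^ 2 * E := by rw [if_neg hm.ne']

lemma sum_range_ite_pow (α r : ℝ) (hr : r ≠ 1) (k : ℕ) :
    ∑ m ∈ range k, (if m = 0 then 1 else α * r ^ m)
      = (1 - α) * (if 1 ≤ k then 1 else 0) + α * ((1 - r ^ k) / (1 - r)) := by
  have hsplit : ∀ m : ℕ, (if m = 0 then 1 else α * r ^ m)
      = (1 - α) * (if m = 0 then 1 else 0) + α * r ^ m := fun m => by
    split_ifs with hm <;> simp [hm]
  have hr' : 1 - r ≠ 0 := sub_ne_zero.mpr hr.symm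
  rw [sum_congr rfl fun m _ => hsplit m, sum_add_distrib, ← mul_sum, ← mul_sum, sum_ite_eq',
    geom_sum_eq hr]
  simp only [mem_range, Nat.lt_iff_add_one_le, zero_add]
  field_simp
  ring

structure IsSpectralDecomposition {M : ℕ} {ι : Type*} [Fintype ι] (A : Matrix (Fin M) (Fin M) ℝ)
    (lam : ι → ℂ) (P : ι → Matrix (Fin M) (Fin M) ℂ) : Prop where
  completeOrthogonalIdempotents : CompleteOrthogonalIdempotents P
  conjTranspose_eq : ∀ i, (P i)ᴴ = P i
  map_ofReal_eq : A.map (fun x => (x : ℂ)) = ∑ i, lam i • P i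

namespace IsSpectralDecomposition

variable {n M : ℕ} {ι : Type*} [Fintype ι] {A : Matrix (Fin M) (Fin M) ℝ} {lam : ι → ℂ}
  {P : ι → Matrix (Fin M) (Fin M) ℂ}

lemma frobSq_mul_pow (h : IsSpectralDecomposition A lam P) (B : Matrix (Fin n) (Fin M) ℝ)
    (m : ℕ) :
    frobSq (B * A ^ m) = ∑ i, ‖lam i‖ ^ (2 * m) * frobSqC (B.map (fun x => (x : ℂ)) * P i) := by
  have hmap : (B * A ^ m).map (fun x => (x : ℂ))
      = B.map (fun x => (x : ℂ)) * (A.map (fun x => (x : ℂ))) ^ m :=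
    (Matrix.map_mul (f := Complex.ofRealHom)).trans
      (by rw [Matrix.map_pow _ Complex.ofRealHom]; rfl)
  rw [← frobSqC_map_ofReal, hmap, h.map_ofReal_eq, h.completeOrthogonalIdempotents.sum_smul_pow,
    frobSqC_mul_sum_smul h.conjTranspose_eq h.completeOrthogonalIdempotents.ortho]
  simp only [norm_pow, ← pow_mul, mul_comm m 2]

variable [DecidableEq ι] {i₀ : ι}

lemma frobSq_ctr_mul_pow (h : IsSpectralDecomposition A lam P)
    (hP₀ : P i₀ = of fun _ _ => (M : ℂ)⁻¹) (B : Matrix (Fin n) (Fin M) ℝ) (m : ℕ) :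
    frobSq (ctr B * A ^ m) = ∑ i ∈ univ.erase i₀,
      ‖lam i‖ ^ (2 * m) * frobSqC ((ctr B).map (fun x => (x : ℂ)) * P i) := by
  rw [h.frobSq_mul_pow, ← add_sum_erase _ _ (mem_univ i₀), hP₀, map_ofReal_ctr_mul_const]
  simp [frobSqC]

lemma frobSq_ctr_mul_pow_le (h : IsSpectralDecomposition A lam P)
    (hP₀ : P i₀ = of fun _ _ => (M : ℂ)⁻¹) {r : ℝ} (hr : ∀ i ≠ i₀, ‖lam i‖ ≤ r)
    (B : Matrix (Fin n) (Fin M) ℝ) (m : ℕ) :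
    frobSq (ctr B * A ^ m) ≤ r ^ (2 * m) * frobSq (ctr B) := by
  have h₀ := h.frobSq_ctr_mul_pow hP₀ B 0
  rw [pow_zero, Matrix.mul_one] at h₀
  rw [h.frobSq_ctr_mul_pow hP₀, h₀, mul_sum]
  refine sum_le_sum fun i hi => ?_
  simp only [mul_zero, pow_zero, one_mul]
  exact mul_le_mul_of_nonneg_right (pow_le_pow_left₀ (norm_nonneg _) (hr i (ne_of_mem_erase hi)) _)
    (frobSqC_nonneg _)

lemma integral_frobSq_ctr_mul_pow_le {Ω : Type*} [MeasurableSpace Ω] {μ : Measure Ω}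
    (h : IsSpectralDecomposition A lam P) (hP₀ : P i₀ = of fun _ _ => (M : ℂ)⁻¹)
    {g : Ω → Matrix (Fin n) (Fin M) ℝ} {c : ι → ℝ}
    (hg : ∀ i ≠ i₀, Integrable (fun ω => frobSqC ((ctr (g ω)).map (fun x => (x : ℂ)) * P i)) μ ∧
      ∫ ω, frobSqC ((ctr (g ω)).map (fun x => (x : ℂ)) * P i) ∂μ ≤ c i) (m : ℕ) :
    Integrable (fun ω => frobSq (ctr (g ω) * A ^ m)) μ ∧
      ∫ ω, frobSq (ctr (g ω) * A ^ m) ∂μ ≤ ∑ i ∈ univ.erase i₀, ‖lam i‖ ^ (2 * m) * c i := by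
  simp only [h.frobSq_ctr_mul_pow hP₀]
  have hint : ∀ i ∈ univ.erase i₀, Integrable
      (fun ω => ‖lam i‖ ^ (2 * m) * frobSqC ((ctr (g ω)).map (fun x => (x : ℂ)) * P i)) μ :=
    fun i hi => (hg i (ne_of_mem_erase hi)).1.const_mul _
  refine ⟨integrable_finsetSum _ hint, ?_⟩
  rw [integral_finsetSum _ hint]
  refine sum_le_sum fun i hi => ?_
  rw [integral_const_mul]
  exact mul_le_mul_of_nonneg_left (hg i (ne_of_mem_erase hi)).2 (by positivity)

lemma frobNorm_ctr_mul_pow_le (h : IsSpectralDecomposition A lam P)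
    (hP₀ : P i₀ = of fun _ _ => (M : ℂ)⁻¹) {r : ℝ} (hr0 : 0 ≤ r) (hr : ∀ i ≠ i₀, ‖lam i‖ ≤ r)
    (B : Matrix (Fin n) (Fin M) ℝ) (m : ℕ) :
    frobNorm (ctr B * A ^ m) ≤ r ^ m * frobNorm (ctr B) := by
  calc frobNorm (ctr B * A ^ m) ≤ √((r ^ m) ^ 2 * frobSq (ctr B)) := by
        rw [← pow_mul, mul_comm m 2]
        exact Real.sqrt_le_sqrt (h.frobSq_ctr_mul_pow_le hP₀ hr B m)
    _ = r ^ m * frobNorm (ctr B) := by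
        rw [Real.sqrt_mul (sq_nonneg _), Real.sqrt_sq (pow_nonneg hr0 m), frobNorm]

lemma integral_frobNorm_ctr_mul_pow_le {Ω : Type*} [MeasurableSpace Ω] {μ : Measure Ω}
    [IsProbabilityMeasure μ] (h : IsSpectralDecomposition A lam P)
    (hP₀ : P i₀ = of fun _ _ => (M : ℂ)⁻¹) {r α E : ℝ} {e : ι → ℝ} (hr0 : 0 ≤ r)
    (hr : ∀ i ≠ i₀, ‖lam i‖ ≤ r) (hesum : ∑ i ∈ univ.erase i₀, e i = 1)
    (hα : α = if r ≠ 0 then √(∑ i ∈ univ.erase i₀, e i * (‖lam i‖ / r) ^ 2) else 1)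
    {g : Ω → Matrix (Fin n) (Fin M) ℝ}
    (hg : ∀ i ≠ i₀, Integrable (fun ω => frobSqC ((ctr (g ω)).map (fun x => (x : ℂ)) * P i)) μ ∧
      ∫ ω, frobSqC ((ctr (g ω)).map (fun x => (x : ℂ)) * P i) ∂μ ≤ e i * E) (m : ℕ) :
    Integrable (fun ω => frobNorm (ctr (g ω) * A ^ m)) μ ∧
      ∫ ω, frobNorm (ctr (g ω) * A ^ m) ∂μ ≤ √E * (if m = 0 then 1 else α * r ^ m) := by
  obtain ⟨hint, hle⟩ := h.integral_frobSq_ctr_mul_pow_le hP₀ hg m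
  have hc : ∀ i ∈ univ.erase i₀, 0 ≤ e i * E := fun i hi =>
    (integral_nonneg fun _ => frobSqC_nonneg _).trans (hg i (ne_of_mem_erase hi)).2
  have hb := sum_pow_mul_le_sq_mul (x := fun i => ‖lam i‖)
    (fun i hi => ⟨norm_nonneg _, hr i (ne_of_mem_erase hi)⟩) hc hesum hα m
  have hα0 : 0 ≤ α := by rw [hα]; split_ifs <;> positivity
  have hb0 : 0 ≤ (if m = 0 then 1 else α * r ^ m) := by split_ifs <;> positivity
  refine ⟨hint.sqrt fun _ => frobSq_nonneg _, ?_⟩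
  calc ∫ ω, frobNorm (ctr (g ω) * A ^ m) ∂μ ≤ √(∫ ω, frobSq (ctr (g ω) * A ^ m) ∂μ) :=
        integral_sqrt_le_sqrt_integral hint fun _ => frobSq_nonneg _
    _ ≤ √((if m = 0 then 1 else α * r ^ m) ^ 2 * E) := Real.sqrt_le_sqrt (hle.trans hb)
    _ = √E * (if m = 0 then 1 else α * r ^ m) := by
        rw [Real.sqrt_mul (sq_nonneg _), Real.sqrt_sq hb0, mul_comm]

end IsSpectralDecomposition

theorem statement10_general
    (n M Q : ℕ) (hM : 0 < M) (hQ : 1 < Q)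
    -- the consensus matrix: nonnegative, doubly stochastic (A4), normal (A4),
    -- irreducible (strongly connected graph, A3) and primitive (positive diagonal)
    (A : Matrix (Fin M) (Fin M) ℝ)
    (hrows : ∀ i, ∑ j, A i j = 1)
    (hcols : ∀ j, ∑ i, A i j = 1)
    -- spectral decomposition of `A` into orthogonal projectors onto its `Q` distinct
    -- eigenspaces, with eigenvalues ordered by decreasing modulus, `λ₁ = 1 > |λ₂|`
    (lam : Fin Q → ℂ) (P : Fin Q → Matrix (Fin M) (Fin M) ℂ)
    (hdecomp : A.map (fun x => (x : ℂ)) = ∑ q, lam q • P q)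
    (hherm : ∀ q, (P q)ᴴ = P q)
    (hidem : ∀ q, P q * P q = P q)
    (horth : ∀ q q', q ≠ q' → P q * P q' = 0)
    (hPsum : ∑ q, P q = 1)
    (hord : ∀ q q' : Fin Q, q ≤ q' → ‖lam q'‖ ≤ ‖lam q‖)
    (hP1 : ∀ q : Fin Q, (q : ℕ) = 0 → P q = Matrix.of fun _ _ => (M : ℂ)⁻¹)
    (lam2 : ℝ) (hlam2 : lam2 = ‖lam ⟨1, hQ⟩‖) (hlam2lt : lam2 < 1)
    -- probability space carrying the minibatch randomness, the random iterates `W k`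
    -- and the random stochastic subgradient matrices `G k`
    {Ω : Type*} [m0 : MeasurableSpace Ω] (μ : Measure Ω) [IsProbabilityMeasure μ]
    (W G : ℕ → Ω → Matrix (Fin n) (Fin M) ℝ)
    -- constant learning rate and the decentralized update, with deterministic
    -- initialization `W0`
    (η : ℝ) (hη : 0 < η)
    (W0 : Matrix (Fin n) (Fin M) ℝ) (hW0 : ∀ ω, W 0 ω = W0)
    (hupd : ∀ k ω, W (k + 1) ω = W k ω * A - η • G k ω)
    -- the energy constants `R_sp` and `E_sp`
    (Rsp Esp : ℝ) (hRsp : frobSq (ctr W0) ≤ Rsp)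
    -- bounds `e q` on the normalized fractions of energy of `ΔG(k)` in the eigenspaces,
    -- and the effective energy coefficient `α`
    (e : Fin Q → ℝ)
    (hesum : ∑ q ∈ Finset.univ.filter (fun q : Fin Q => (q : ℕ) ≠ 0), e q = 1)
    (he : ∀ k, ∀ q : Fin Q, (q : ℕ) ≠ 0 →
      Integrable (fun ω => frobSqC ((ctr (G k ω)).map (fun x => (x : ℂ)) * P q)) μ ∧
      ∫ ω, frobSqC ((ctr (G k ω)).map (fun x => (x : ℂ)) * P q) ∂μ ≤ e q * Esp)
    (α : ℝ)
    (hα : α = if lam2 ≠ 0 then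
        Real.sqrt (∑ q ∈ Finset.univ.filter (fun q : Fin Q => (q : ℕ) ≠ 0),
          e q * (‖lam q‖ / lam2) ^ 2)
      else 1)
 :
    ∀ k : ℕ,
      ∫ ω, frobNorm (ctr (W k ω)) ∂μ ≤
        Real.sqrt M * Real.sqrt Rsp * lam2 ^ k
        + η * Real.sqrt Esp *
            ((1 - α) * (if 1 ≤ k then (1 : ℝ) else 0)
              + α * ((1 - lam2 ^ k) / (1 - lam2))) := by
  have hA : IsSpectralDecomposition A lam P :=
    ⟨⟨⟨hidem, fun q q' => horth q q'⟩, hPsum⟩, hherm, hdecomp⟩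
  set q₀ : Fin Q := ⟨0, by omega⟩
  have hne : ∀ q : Fin Q, q ≠ q₀ ↔ (q : ℕ) ≠ 0 := fun q => by simp [q₀, Fin.ext_iff]
  have hq₀ : univ.filter (fun q : Fin Q => (q : ℕ) ≠ 0) = univ.erase q₀ := by ext q; simp [hne]
  have hlam2_nonneg : 0 ≤ lam2 := hlam2 ▸ norm_nonneg _
  have hle : ∀ q ≠ q₀, ‖lam q‖ ≤ lam2 := fun q hq =>
    hlam2 ▸ hord _ _ (Fin.le_def.mpr (Nat.one_le_iff_ne_zero.mpr ((hne q).mp hq)))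
  have hgrad := fun s => hA.integral_frobNorm_ctr_mul_pow_le (hP1 q₀ rfl) hlam2_nonneg hle
    (hq₀ ▸ hesum) (hq₀ ▸ hα) (fun q hq => he s q ((hne q).mp hq))
  have hctr := fun ω => ctr_eq_mul_pow_sub_sum_of_succ hrows hcols
    (W := fun k => W k ω) (G := fun k => G k ω) (fun k => hupd k ω)
  intro k
  have hinit : frobNorm (ctr W0 * A ^ k) ≤ √M * √Rsp * lam2 ^ k := by
    have hM1 : 1 ≤ √(M : ℝ) := Real.one_le_sqrt.mpr (by exact_mod_cast hM)
    calc frobNorm (ctr W0 * A ^ k) ≤ lam2 ^ k * frobNorm (ctr W0) :=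
          hA.frobNorm_ctr_mul_pow_le (hP1 q₀ rfl) hlam2_nonneg hle W0 k
      _ ≤ 1 * √Rsp * lam2 ^ k := by rw [one_mul, mul_comm]; gcongr; exact Real.sqrt_le_sqrt hRsp
      _ ≤ √M * √Rsp * lam2 ^ k := by gcongr
  calc ∫ ω, frobNorm (ctr (W k ω)) ∂μ
      ≤ frobNorm (ctr W0 * A ^ k)
        + η * ∑ s ∈ range k, ∫ ω, frobNorm (ctr (G s ω) * A ^ (k - 1 - s)) ∂μ :=
        integral_le_add_mul_sum_integral (fun _ => Real.sqrt_nonneg _)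
          (fun s _ => (hgrad s _).1)
          fun ω => hW0 ω ▸ hctr ω k ▸ frobNorm_sub_smul_sum_le _ hη.le _ _
    _ ≤ √M * √Rsp * lam2 ^ k
        + η * ∑ s ∈ range k, √Esp * (if k - 1 - s = 0 then 1 else α * lam2 ^ (k - 1 - s)) := by
        gcongr with s
        exact (hgrad s _).2
    _ = _ := by
        rw [← mul_sum, sum_range_reflect (fun m => if m = 0 then 1 else α * lam2 ^ m) k,
          sum_range_ite_pow α lam2 hlam2lt.ne k]
        ring

/-- **Corollary 2 (consensus error, constant learning rate).** For the decentralized update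
`W(k+1) = W(k) A - η G(k)` with a constant learning rate, the expected consensus error at
every iteration `k` satisfies the refined bound involving `α`. -/
theorem statement10
    (n M Q : ℕ) (hM : 0 < M) (hQ : 1 < Q)
    -- the consensus matrix: nonnegative, doubly stochastic (A4), normal (A4),
    -- irreducible (strongly connected graph, A3) and primitive (positive diagonal)
    (A : Matrix (Fin M) (Fin M) ℝ)
    (hnonneg : ∀ i j, 0 ≤ A i j)
    (hrows : ∀ i, ∑ j, A i j = 1)
    (hcols : ∀ j, ∑ i, A i j = 1)
    (hnormal : Aᵀ * A = A * Aᵀ)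
    (hirr : ∀ i j, ∃ k : ℕ, 0 < (A ^ k) i j)
    (hdiag : ∀ i, 0 < A i i)
    -- spectral decomposition of `A` into orthogonal projectors onto its `Q` distinct
    -- eigenspaces, with eigenvalues ordered by decreasing modulus, `λ₁ = 1 > |λ₂|`
    (lam : Fin Q → ℂ) (P : Fin Q → Matrix (Fin M) (Fin M) ℂ)
    (hdecomp : A.map (fun x => (x : ℂ)) = ∑ q, lam q • P q)
    (hinj : Function.Injective lam)
    (hherm : ∀ q, (P q)ᴴ = P q)
    (hidem : ∀ q, P q * P q = P q)
    (horth : ∀ q q', q ≠ q' → P q * P q' = 0)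
    (hPsum : ∑ q, P q = 1)
    (hord : ∀ q q' : Fin Q, q ≤ q' → ‖lam q'‖ ≤ ‖lam q‖)
    (hlam1 : ∀ q : Fin Q, (q : ℕ) = 0 → lam q = 1)
    (hP1 : ∀ q : Fin Q, (q : ℕ) = 0 → P q = Matrix.of fun _ _ => (M : ℂ)⁻¹)
    (lam2 : ℝ) (hlam2 : lam2 = ‖lam ⟨1, hQ⟩‖) (hlam2lt : lam2 < 1)
    -- probability space carrying the minibatch randomness, the random iterates `W k`
    -- and the random stochastic subgradient matrices `G k`
    {Ω : Type*} [m0 : MeasurableSpace Ω] (μ : Measure Ω) [IsProbabilityMeasure μ]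
    (W G : ℕ → Ω → Matrix (Fin n) (Fin M) ℝ)
    (hGmeas : ∀ k i j, Measurable fun ω => G k ω i j)
    -- constant learning rate and the decentralized update, with deterministic
    -- initialization `W0`
    (η : ℝ) (hη : 0 < η)
    (W0 : Matrix (Fin n) (Fin M) ℝ) (hW0 : ∀ ω, W 0 ω = W0)
    (hupd : ∀ k ω, W (k + 1) ω = W k ω * A - η • G k ω)
    -- the energy constants `R_sp` and `E_sp`
    (Rsp Esp : ℝ) (hRsp : frobSq (ctr W0) ≤ Rsp)
    (hEsp : ∀ k, Integrable (fun ω => frobSq (ctr (G k ω))) μ ∧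
      ∫ ω, frobSq (ctr (G k ω)) ∂μ ≤ Esp)
    -- bounds `e q` on the normalized fractions of energy of `ΔG(k)` in the eigenspaces,
    -- and the effective energy coefficient `α`
    (e : Fin Q → ℝ)
    (hesum : ∑ q ∈ Finset.univ.filter (fun q : Fin Q => (q : ℕ) ≠ 0), e q = 1)
    (he : ∀ k, ∀ q : Fin Q, (q : ℕ) ≠ 0 →
      Integrable (fun ω => frobSqC ((ctr (G k ω)).map (fun x => (x : ℂ)) * P q)) μ ∧
      ∫ ω, frobSqC ((ctr (G k ω)).map (fun x => (x : ℂ)) * P q) ∂μ ≤ e q * Esp)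
    (α : ℝ)
    (hα : α = if lam2 ≠ 0 then
        Real.sqrt (∑ q ∈ Finset.univ.filter (fun q : Fin Q => (q : ℕ) ≠ 0),
          e q * (‖lam q‖ / lam2) ^ 2)
      else 1)
    (hWint : ∀ k, Integrable (fun ω => frobNorm (ctr (W k ω))) μ)
 :
    ∀ k : ℕ,
      ∫ ω, frobNorm (ctr (W k ω)) ∂μ ≤
        Real.sqrt M * Real.sqrt Rsp * lam2 ^ k
        + η * Real.sqrt Esp *
            ((1 - α) * (if 1 ≤ k then (1 : ℝ) else 0)
              + α * ((1 - lam2 ^ k) / (1 - lam2))) :=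
  statement10_general n M Q hM hQ A hrows hcols lam P hdecomp hherm hidem horth hPsum hord hP1 lam2
    hlam2 hlam2lt (m0 := m0) μ W G η hη W0 hW0 hupd Rsp Esp hRsp e hesum he α hα
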